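/- Consider a pullback square of categories E = B ×_A C with projections p : E → C and q : E → B, where g : C → A is a Cartesian fibration and b : B → A has a right adjoint b*. Then p has a right adjoint p*, the counit p p* → id is pointwise g-Cartesian, and there is a natural isomorphism q p* ≅ b* g. -/

import Mathlib

open CategoryTheory

universe v₁ v₂ v₃ u₁ u₂ u₃

def IsCartMor {D : Type u₁} {E : Type u₂} [Category.{v₁} D] [Category.{v₂} E]
    (p : D ⥤ E) {d' d : D} (φ : d' ⟶ d) : Prop :=
  ∀ (d'' : D) (ψ : d'' ⟶ d) (u : p.obj d'' ⟶ p.obj d'),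
    u ≫ p.map φ = p.map ψ →
      ∃! χ : d'' ⟶ d', χ ≫ φ = ψ ∧ p.map χ = u

def IsCartFib {D : Type u₁} {E : Type u₂} [Category.{v₁} D] [Category.{v₂} E]
    (p : D ⥤ E) : Prop :=
  ∀ (d : D) (e : E) (f : e ⟶ p.obj d),
    ∃ (d' : D) (φ : d' ⟶ d) (h : p.obj d' = e),
      IsCartMor p φ ∧ p.map φ = eqToHom h ≫ f

variable {A : Type u₁} {B : Type u₂} {C : Type u₃}
  [Category.{v₁} A] [Category.{v₂} B] [Category.{v₃} C]

/-- The (pseudo-)pullback `E = B ×_A C` of `b : B ⥤ A` and `g : C ⥤ A`: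
objects are triples `(x, y, e)` with `e : b x ≅ g y`. -/
structure PBObj (b : B ⥤ A) (g : C ⥤ A) where
  x : B
  y : C
  e : b.obj x ≅ g.obj y

@[ext]
structure PBHom {b : B ⥤ A} {g : C ⥤ A} (X Y : PBObj b g) where
  fb : X.x ⟶ Y.x
  fc : X.y ⟶ Y.y
  w : b.map fb ≫ Y.e.hom = X.e.hom ≫ g.map fc

instance (b : B ⥤ A) (g : C ⥤ A) : Category (PBObj b g) where
  Hom := PBHom
  id X := ⟨𝟙 _, 𝟙 _, by simp⟩
  comp f f' := ⟨f.fb ≫ f'.fb, f.fc ≫ f'.fc, by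
    rw [Functor.map_comp, Functor.map_comp, Category.assoc, f'.w, ← Category.assoc,
      f.w, Category.assoc]⟩
  id_comp f := by apply PBHom.ext <;> simp
  comp_id f := by apply PBHom.ext <;> simp
  assoc f f' f'' := by apply PBHom.ext <;> simp

/-- First projection `B ×_A C ⥤ B`. -/
def projB (b : B ⥤ A) (g : C ⥤ A) : PBObj b g ⥤ B where
  obj := PBObj.x
  map := PBHom.fb

/-- Second projection `B ×_A C ⥤ C`. -/
def projC (b : B ⥤ A) (g : C ⥤ A) : PBObj b g ⥤ C where
  obj := PBObj.y
  map := PBHom.fc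

/-! A morphism from `X = (x, y, e)` into `(b* g c, L c)`, where `L c ⟶ c` is the `g`-Cartesian
lift of `ε_{g c}`, is a map `x ⟶ b* g c`, i.e. by adjunction a map `b x ⟶ g c` in `A`, together
with a map `y ⟶ L c` lying over the induced map `g y ≅ b x ⟶ b b* g c = g (L c)`. By the
Cartesian property such pairs are the same as maps `y ⟶ c`, naturally in `X`; this bijection
defines `p*` together with the adjunction, whose counit is the Cartesian lift and whose
`B`-component is `b* g`. -/

namespace IsCartMor

variable {D : Type u₁} {E : Type u₂} [Category.{v₁} D] [Category.{v₂} E]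
  {p : D ⥤ E} {d' d : D} {φ : d' ⟶ d} {d'' : D}

noncomputable def lift (hφ : IsCartMor p φ) (ψ : d'' ⟶ d) (u : p.obj d'' ⟶ p.obj d')
    (hu : u ≫ p.map φ = p.map ψ) : d'' ⟶ d' :=
  (hφ d'' ψ u hu).exists.choose

lemma hom_ext (hφ : IsCartMor p φ) {χ χ' : d'' ⟶ d'} (h : χ ≫ φ = χ' ≫ φ)
    (h' : p.map χ = p.map χ') : χ = χ' :=
  (hφ d'' (χ' ≫ φ) (p.map χ') (p.map_comp _ _).symm).unique ⟨h, h'⟩ ⟨rfl, rfl⟩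

variable (hφ : IsCartMor p φ)

@[simp]
lemma lift_comp (ψ : d'' ⟶ d) (u : p.obj d'' ⟶ p.obj d') (hu : u ≫ p.map φ = p.map ψ) :
    hφ.lift ψ u hu ≫ φ = ψ :=
  (hφ d'' ψ u hu).exists.choose_spec.1

@[simp]
lemma map_lift (ψ : d'' ⟶ d) (u : p.obj d'' ⟶ p.obj d') (hu : u ≫ p.map φ = p.map ψ) :
    p.map (hφ.lift ψ u hu) = u :=
  (hφ d'' ψ u hu).exists.choose_spec.2

end IsCartMor

namespace IsCartFib

variable {D : Type u₁} {E : Type u₂} [Category.{v₁} D] [Category.{v₂} E]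
  {p : D ⥤ E} (hp : IsCartFib p) {e : E} {d : D} (f : e ⟶ p.obj d)

noncomputable def liftObj : D :=
  (hp d e f).choose

noncomputable def liftHom : hp.liftObj f ⟶ d :=
  (hp d e f).choose_spec.choose

lemma obj_liftObj : p.obj (hp.liftObj f) = e :=
  (hp d e f).choose_spec.choose_spec.choose

lemma isCartMor_liftHom : IsCartMor p (hp.liftHom f) :=
  (hp d e f).choose_spec.choose_spec.choose_spec.1

lemma map_liftHom : p.map (hp.liftHom f) = eqToHom (hp.obj_liftObj f) ≫ f :=
  (hp d e f).choose_spec.choose_spec.choose_spec.2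

end IsCartFib

namespace PBHom

variable {b : B ⥤ A} {g : C ⥤ A}

@[simp]
lemma id_fc (X : PBObj b g) : (𝟙 X : X ⟶ X).fc = 𝟙 X.y := rfl

@[simp]
lemma comp_fc {X Y Z : PBObj b g} (f : X ⟶ Y) (f' : Y ⟶ Z) : (f ≫ f').fc = f.fc ≫ f'.fc :=
  rfl

end PBHom

namespace PBObj

variable {b : B ⥤ A} {g : C ⥤ A} {bstar : A ⥤ B} (adj : b ⊣ bstar) (hg : IsCartFib g)

/-- `p* c`: the domain of the `g`-Cartesian lift of `ε_{g c} : b b* g c ⟶ g c`, paired with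
`b* g c`. -/
noncomputable abbrev cofree (c : C) : PBObj b g :=
  ⟨bstar.obj (g.obj c), hg.liftObj (adj.counit.app (g.obj c)),
    eqToIso (hg.obj_liftObj _).symm⟩

noncomputable abbrev cofreeCounit (c : C) : (cofree adj hg c).y ⟶ c :=
  hg.liftHom (adj.counit.app (g.obj c))

lemma isCartMor_cofreeCounit (c : C) : IsCartMor g (cofreeCounit adj hg c) :=
  hg.isCartMor_liftHom _

@[simp]
lemma cofree_e_hom_comp_map_cofreeCounit (c : C) :
    (cofree adj hg c).e.hom ≫ g.map (cofreeCounit adj hg c) = adj.counit.app (g.obj c) := by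
  simp [cofree, IsCartFib.map_liftHom]

variable {adj hg}

lemma fb_eq_homEquiv {X : PBObj b g} {c : C} (F : X ⟶ cofree adj hg c) :
    F.fb = adj.homEquiv _ _ (X.e.hom ≫ g.map (F.fc ≫ cofreeCounit adj hg c)) := by
  rw [← Equiv.symm_apply_eq, Adjunction.homEquiv_counit, Functor.map_comp, ← Category.assoc,
    ← F.w, Category.assoc, cofree_e_hom_comp_map_cofreeCounit]

variable (adj hg)

lemma map_homEquiv_comp_cofreeCounit (X : PBObj b g) {c : C} (f : X.y ⟶ c) :
    (X.e.inv ≫ b.map (adj.homEquiv _ _ (X.e.hom ≫ g.map f)) ≫ (cofree adj hg c).e.hom) ≫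
      g.map (cofreeCounit adj hg c) = g.map f := by
  rw [Category.assoc, Category.assoc, cofree_e_hom_comp_map_cofreeCounit,
    ← Adjunction.homEquiv_counit, Equiv.symm_apply_apply, Iso.inv_hom_id_assoc]

@[simps]
noncomputable def toCofree (X : PBObj b g) {c : C} (f : X.y ⟶ c) : X ⟶ cofree adj hg c where
  fb := adj.homEquiv _ _ (X.e.hom ≫ g.map f)
  fc := (isCartMor_cofreeCounit adj hg c).lift f _ (map_homEquiv_comp_cofreeCounit adj hg X f)
  w := by rw [IsCartMor.map_lift, Iso.hom_inv_id_assoc]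

@[simp]
lemma toCofree_fc_comp (X : PBObj b g) {c : C} (f : X.y ⟶ c) :
    (toCofree adj hg X f).fc ≫ cofreeCounit adj hg c = f :=
  (isCartMor_cofreeCounit adj hg c).lift_comp f _ (map_homEquiv_comp_cofreeCounit adj hg X f)

@[simps]
noncomputable def cofreeHomEquiv (X : PBObj b g) (c : C) :
    (X.y ⟶ c) ≃ (X ⟶ cofree adj hg c) where
  toFun := toCofree adj hg X
  invFun F := F.fc ≫ cofreeCounit adj hg c
  left_inv := toCofree_fc_comp adj hg X
  right_inv F := by
    have hfc : (toCofree adj hg X (F.fc ≫ cofreeCounit adj hg c)).fc = F.fc :=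
      (isCartMor_cofreeCounit adj hg c).hom_ext (toCofree_fc_comp adj hg X _) <| by
        rw [toCofree_fc, IsCartMor.map_lift, ← fb_eq_homEquiv, F.w, Iso.inv_hom_id_assoc]
    exact PBHom.ext (fb_eq_homEquiv F).symm hfc

lemma cofreeHomEquiv_naturality_left {X' X : PBObj b g} {c : C} (f : X' ⟶ X) (k : X.y ⟶ c) :
    cofreeHomEquiv adj hg X' c (f.fc ≫ k) = f ≫ cofreeHomEquiv adj hg X c k := by
  rw [← Equiv.eq_symm_apply, cofreeHomEquiv_symm_apply, cofreeHomEquiv_apply, PBHom.comp_fc,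
    Category.assoc, toCofree_fc_comp]

lemma cofreeHomEquiv_symm_id (c : C) :
    (cofreeHomEquiv adj hg (cofree adj hg c) c).symm (𝟙 _) = cofreeCounit adj hg c := by
  rw [cofreeHomEquiv_symm_apply, PBHom.id_fc, Category.id_comp]

lemma cofreeHomEquiv_map_fb {c c' : C} (k : c ⟶ c') :
    (cofreeHomEquiv adj hg (cofree adj hg c) c'
      ((cofreeHomEquiv adj hg (cofree adj hg c) c).symm (𝟙 _) ≫ k)).fb =
      bstar.map (g.map k) := by
  rw [cofreeHomEquiv_symm_id, cofreeHomEquiv_apply, toCofree_fb, Functor.map_comp,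
    ← Category.assoc, cofree_e_hom_comp_map_cofreeCounit, Adjunction.homEquiv_unit,
    Functor.map_comp, Adjunction.right_triangle_components_assoc]

end PBObj

/-- If `g : C ⥤ A` is a Cartesian fibration and `b : B ⥤ A` has a right adjoint
`b*`, then the projection `p : B ×_A C ⥤ C` has a right adjoint `p*`, the counit
`p p* ⟶ id` is pointwise `g`-Cartesian, and `q p* ≅ b* g` (where `q` is the other
projection). -/
theorem pullback_proj_right_adjoint
    (b : B ⥤ A) (g : C ⥤ A) (bstar : A ⥤ B) (adj : b ⊣ bstar)
    (hg : IsCartFib g) :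
    ∃ (pstar : C ⥤ PBObj b g) (adj' : projC b g ⊣ pstar),
      (∀ c : C, IsCartMor g (adj'.counit.app c)) ∧
      Nonempty (pstar ⋙ projB b g ≅ g ⋙ bstar) := by
  let adj' := Adjunction.adjunctionOfEquivRight (F := projC b g) (PBObj.cofreeHomEquiv adj hg)
    (fun _ _ _ => PBObj.cofreeHomEquiv_naturality_left adj hg)
  refine ⟨_, adj', fun c => ?_, ⟨NatIso.ofComponents (fun _ => Iso.refl _) fun k => ?_⟩⟩
  · have hcounit : adj'.counit.app c = PBObj.cofreeCounit adj hg c :=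
      PBObj.cofreeHomEquiv_symm_id adj hg c
    exact hcounit ▸ PBObj.isCartMor_cofreeCounit adj hg c
  · exact (Category.comp_id _).trans
      ((PBObj.cofreeHomEquiv_map_fb adj hg k).trans (Category.id_comp _).symm)
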